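/- For any no-signaling strategy Q in the r-party hypergraph game on G = (A_1,...,A_r, E), the function g : E → [0,1] defined by g(e) := Q(e,...,e | a_1,...,a_r) for e = (a_1,...,a_r) is a fractional matching: for every i and every a ∈ A_i, the sum ∑_{e ∈ E, e_i = a} g(e) ≤ 1. -/

import Mathlib

open scoped Classical

/-!
On the diagonal input `e`, the outcome "every party answers `e`" is one of the outcomes in which
party `i` answers `e`, so `Q(e,…,e | e)` is at most the `i`-th marginal of `e` at input `e`.
By no-signalling that marginal depends only on `e i = v`, so for all edges through `v` it can be
evaluated at one common input `e₀`; the marginals of distinct answers at a fixed input sum to at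
most `1`.
-/

open Finset

namespace NoSignaling

variable {ι O X : Type*} [Fintype ι] [DecidableEq ι] [Fintype O] [DecidableEq O]

def marginal (Q : (ι → O) → X → ℝ) (i : ι) (a : X) (x : O) : ℝ :=
  ∑ o : ι → O, if o i = x then Q o a else 0

variable {Q : (ι → O) → X → ℝ} {a : X}

lemma marginal_nonneg (hQ0 : ∀ o, 0 ≤ Q o a) (i : ι) (x : O) : 0 ≤ marginal Q i a x :=
  sum_nonneg fun o _ => ite_nonneg (hQ0 o) le_rfl

lemma diag_le_marginal (hQ0 : ∀ o, 0 ≤ Q o a) (i : ι) (x : O) :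
    Q (fun _ => x) a ≤ marginal Q i a x := by
  have := single_le_sum (f := fun o : ι → O => if o i = x then Q o a else 0)
    (fun o _ => ite_nonneg (hQ0 o) le_rfl) (mem_univ fun _ => x)
  simpa [marginal] using this

lemma sum_marginal (i : ι) : ∑ x, marginal Q i a x = ∑ o, Q o a := by
  unfold marginal
  rw [sum_comm]
  exact sum_congr rfl fun o _ => by simp

lemma sum_marginal_le_one (hQ0 : ∀ o, 0 ≤ Q o a) (hQ1 : ∑ o, Q o a = 1) (i : ι) (S : Finset O) :
    ∑ x ∈ S, marginal Q i a x ≤ 1 :=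
  calc ∑ x ∈ S, marginal Q i a x ≤ ∑ x, marginal Q i a x :=
        sum_le_univ_sum_of_nonneg (marginal_nonneg hQ0 i)
    _ = 1 := (sum_marginal i).trans hQ1

end NoSignaling

open NoSignaling in
theorem ns_strategy_gives_fractional_matching
    (r : ℕ) (A : Fin r → Type) [∀ i, Fintype (A i)]
    (E : Finset (∀ i, A i))
    (Q : (Fin r → (∀ j, A j)) → (∀ i, A i) → ℝ)
    (hQ0 : ∀ o a, 0 ≤ Q o a)
    (hQ1 : ∀ a, ∑ o : Fin r → (∀ j, A j), Q o a = 1)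
    (hQns : ∀ (i : Fin r) (a a' : ∀ j, A j), a i = a' i →
        ∀ ei : ∀ j, A j,
          (∑ o : Fin r → (∀ j, A j), if o i = ei then Q o a else 0) =
          (∑ o : Fin r → (∀ j, A j), if o i = ei then Q o a' else 0)) :
    (∀ e ∈ E, 0 ≤ Q (fun _ => e) e ∧ Q (fun _ => e) e ≤ 1) ∧
    (∀ i, ∀ v : A i,
      ∑ e ∈ E.filter (fun e => e i = v), Q (fun _ => e) e ≤ 1) := by
  refine ⟨fun e _ => ⟨hQ0 _ _, ?_⟩, fun i v => ?_⟩
  · exact (single_le_sum (fun o _ => hQ0 o e) (mem_univ _)).trans_eq (hQ1 e)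
  rcases (E.filter fun e => e i = v).eq_empty_or_nonempty with hempty | ⟨e₀, he₀⟩
  · simp [hempty]
  calc ∑ e ∈ E.filter (fun e => e i = v), Q (fun _ => e) e
      ≤ ∑ e ∈ E.filter (fun e => e i = v), marginal Q i e e :=
        sum_le_sum fun e _ => diag_le_marginal (hQ0 · e) i e
    _ = ∑ e ∈ E.filter (fun e => e i = v), marginal Q i e₀ e :=
        sum_congr rfl fun e he =>
          hQns i e e₀ ((mem_filter.mp he).2.trans (mem_filter.mp he₀).2.symm) e
    _ ≤ 1 := sum_marginal_le_one (hQ0 · e₀) (hQ1 e₀) i _
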